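/- Let k > t ≥ 1 and r ≥ 5 be integers, let n ≥ k + r·t, and let s = ⌈r/3⌉, or possibly s = ⌊r/3⌋ if r ≡ 1 (mod 3). Let I_1, ..., I_s be distinct t-stars in the k-element subsets of [n] with centres T_1, ..., T_s respectively such that |T_1 ∩ T_s| ≥ max(1, 2t - k), and let F = I_1 ∪ ... ∪ I_s. Let Ĩ_s be a t-star whose centre T̃_s is disjoint from T_1 ∪ ... ∪ T_s, and let F̃ = I_1 ∪ ... ∪ I_{s-1} ∪ Ĩ_s. Let (C_1, ..., C_s) be a partition of a set of r colours whose vector of part sizes (|C_1|, ..., |C_s|) is an optimal solution of MAX(r), let Φ(C) be the set of colourings of F in which every member F of the family receives a colour from the union of those C_i with F ∈ I_i, and let Φ̃(C) be defined analogously for F̃ (with Ĩ_s in place of I_s). Then |Φ̃(C)| ≥ (6/5)·|Φ(C)|, unless |C_1| = |C_s| = 2, in which case |Φ̃(C)| ≥ |Φ(C)|. -/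

import Mathlib

/-- The `t`-star of `k`-element subsets of `[n]` with centre `T`. -/
def setStar (n k : ℕ) (T : Finset (Fin n)) : Finset (Finset (Fin n)) :=
  Finset.univ.filter fun A : Finset (Fin n) => A.card = k ∧ T ⊆ A

/-- The set of feasible objective values of the problem `MAX(r)`. -/
def feasibleProds (r : ℕ) : Set ℕ :=
  {P : ℕ | ∃ (s' : ℕ) (m : Fin s' → ℕ), s' ≤ r ∧ (∀ i, 0 < m i) ∧
    (∑ i, m i) = r ∧ (∏ i, m i) = P}

attribute [local instance] Classical.propDecidable

/-!
Write `b A` for the number of colours the first `s - 1` stars offer a `k`-set `A`, and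
`m = |C_s|`. Both `|Φ(C)|` and `|Φ̃(C)|` are products over the `k`-sets, and they differ only on
the sets containing exactly one of the centres `T_s`, `T̃_s`. An involution `σ` of the ground set
exchanging `T_s` with `T̃_s` and fixing everything else maps the sets containing only `T̃_s` onto
those containing only `T_s`, and it does not decrease `b`, because the other centres avoid `T̃_s`.
An optimal solution of `MAX(r)` has no part `1`, so `b A` is `0` or at least `2`, and on these
values the factor `(b + m) / max b 1` is nonincreasing; this gives `|Φ(C)| ≤ |Φ̃(C)|`.
For the factor `6/5`, take a `k`-set `A` containing `T̃_s` and `T_1 \ T_s` but no other centre: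
`b A = 0`, while `σ A ⊇ T_1` gives `b (σ A) ≥ |C_1|`, so this pair alone contributes
`1/m + 1/b (σ A) ≤ 5/6` unless `|C_1| = |C_s| = 2`.
-/

open Finset Function

theorem prod_mem_feasibleProds {ι : Type*} {r : ℕ} (I : Finset ι) (m : ι → ℕ)
    (hpos : ∀ i ∈ I, 0 < m i) (hsum : ∑ i ∈ I, m i = r) : ∏ i ∈ I, m i ∈ feasibleProds r := by
  refine ⟨#I, fun x => m (I.equivFin.symm x), ?_, fun x => hpos _ (I.equivFin.symm x).2, ?_, ?_⟩
  · simpa [← hsum] using card_nsmul_le_sum I m 1 hpos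
  · rw [← hsum, ← sum_coe_sort I, ← I.equivFin.symm.sum_comp]
  · rw [← prod_coe_sort I, ← I.equivFin.symm.prod_comp]

/-- Merging a part of size `1` into another part would increase the product. -/
theorem two_le_of_isGreatest_feasibleProds {ι : Type*} [DecidableEq ι] {r : ℕ} (I : Finset ι)
    (m : ι → ℕ) (hI : 2 ≤ #I) (hpos : ∀ i ∈ I, 0 < m i) (hsum : ∑ i ∈ I, m i = r)
    (hopt : IsGreatest (feasibleProds r) (∏ i ∈ I, m i)) : ∀ i ∈ I, 2 ≤ m i := by
  by_contra! ⟨j, hj, hmj⟩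
  have hmj : m j = 1 := by have := hpos j hj; omega
  obtain ⟨l, hl⟩ : (I.erase j).Nonempty := by
    rw [← card_pos, card_erase_of_mem hj]; omega
  have hmerge := hopt.2 <| prod_mem_feasibleProds (I.erase j) (update m l (m l + 1))
    (fun i hi => by by_cases h : i = l <;> simp [h, hpos i (mem_of_mem_erase hi)])
    (by rw [sum_update_of_mem hl, sdiff_singleton_eq_erase, ← hsum, ← add_sum_erase _ _ hj,
          ← add_sum_erase _ _ hl, hmj]; ring)
  rw [prod_update_of_mem hl, sdiff_singleton_eq_erase, ← mul_prod_erase _ _ hj,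
    ← mul_prod_erase _ _ hl, hmj] at hmerge
  have : 0 < ∏ i ∈ (I.erase j).erase l, m i :=
    prod_pos fun i hi => hpos i (mem_of_mem_erase (mem_of_mem_erase hi))
  nlinarith

theorem two_le_card_of_isGreatest_feasibleProds {r s : ℕ} (C : ℕ → Finset (Fin r))
    (hs : 2 ≤ s) (hpos : ∀ i < s, 0 < #(C i)) (hC : (range s : Set ℕ).PairwiseDisjoint C)
    (hcover : (range s).biUnion C = univ)
    (hopt : IsGreatest (feasibleProds r) (∏ i ∈ range s, #(C i))) : ∀ i < s, 2 ≤ #(C i) :=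
  fun i hi => two_le_of_isGreatest_feasibleProds (range s) (fun i => #(C i)) (by simpa)
    (fun i hi => hpos i (mem_range.1 hi))
    (by rw [← card_biUnion hC, hcover, card_univ, Fintype.card_fin]) hopt i (mem_range.2 hi)

theorem card_colourings_eq_prod {α β ι : Type*} (S : Finset α) (I : Finset ι)
    (P : ι → α → Prop) (C : ι → Finset β) (hC : (I : Set ι).PairwiseDisjoint C) :
    Nat.card {φ : S → β // ∀ a : S, ∃ i ∈ I, P i a ∧ φ a ∈ C i} =
      ∏ a ∈ S, ∑ i ∈ I with P i a, #(C i) := by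
  have hmem : ∀ (a : α) (x : β),
      (∃ i ∈ I, P i a ∧ x ∈ C i) ↔ x ∈ {i ∈ I | P i a}.biUnion C := by
    simp [and_assoc]
  have e : {φ : S → β // ∀ a : S, ∃ i ∈ I, P i a ∧ φ a ∈ C i} ≃
      ∀ a : S, {x // x ∈ {i ∈ I | P i a}.biUnion C} :=
    (Equiv.subtypeEquivRight fun (φ : S → β) => forall_congr' fun (a : S) => hmem a (φ a)).trans
      Equiv.subtypePiEquivPi
  rw [Nat.card_congr e, Nat.card_pi, ← prod_coe_sort S]
  refine prod_congr rfl fun a _ => ?_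
  rw [Nat.card_eq_finsetCard, card_biUnion (hC.subset (coe_subset.2 (filter_subset _ I)))]

theorem prod_eq_prod_max_one {α : Type*} {F K : Finset α} (f : α → ℕ)
    (hF : ∀ a, a ∈ F ↔ a ∈ K ∧ f a ≠ 0) : ∏ a ∈ F, f a = ∏ a ∈ K, max (f a) 1 := by
  rw [show F = {a ∈ K | f a ≠ 0} by ext a; simp [hF], prod_filter]
  exact prod_congr rfl fun a _ => by split_ifs <;> omega

theorem exists_lt_pred_or_iff {s : ℕ} (hs : 0 < s) (Q : ℕ → Prop) (R : Prop) :
    ((∃ i < s - 1, Q i) ∨ R) ↔ ∃ i < s, (i < s - 1 ∧ Q i) ∨ (i = s - 1 ∧ R) := by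
  constructor
  · rintro (⟨i, hi, hQ⟩ | hR)
    exacts [⟨i, by omega, .inl ⟨hi, hQ⟩⟩, ⟨s - 1, by omega, .inr ⟨rfl, hR⟩⟩]
  · rintro ⟨i, -, ⟨hi, hQ⟩ | ⟨-, hR⟩⟩
    exacts [.inl ⟨i, hi, hQ⟩, .inr hR]

structure IsSwap {α : Type*} (σ : α → α) (D E : Finset α) : Prop where
  involutive : Involutive σ
  mapsTo_left : ∀ x ∈ D, σ x ∈ E
  mapsTo_right : ∀ x ∈ E, σ x ∈ D
  eq_self : ∀ x, x ∉ D → x ∉ E → σ x = x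

namespace IsSwap

variable {α : Type*} [DecidableEq α] {σ : α → α} {D E : Finset α}

theorem mem_image_iff (h : IsSwap σ D E) {A : Finset α} {x : α} :
    x ∈ A.image σ ↔ σ x ∈ A := by
  conv_lhs => rw [← h.involutive x]
  exact h.involutive.injective.mem_finset_image

theorem card_image (h : IsSwap σ D E) (A : Finset α) : #(A.image σ) = #A :=
  card_image_of_injective A h.involutive.injective

theorem subset_image_iff (h : IsSwap σ D E) {A : Finset α} : D ⊆ A.image σ ↔ E ⊆ A := by
  refine ⟨fun hD x hx => ?_, fun hE x hx => h.mem_image_iff.2 (hE (h.mapsTo_left x hx))⟩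
  rw [← h.involutive x]
  exact h.mem_image_iff.1 (hD (h.mapsTo_right x hx))

theorem subset_image (h : IsSwap σ D E) {A B : Finset α} (hBE : Disjoint B E) (hEA : E ⊆ A)
    (hBA : B \ D ⊆ A) : B ⊆ A.image σ := by
  intro x hx
  rw [h.mem_image_iff]
  by_cases hxD : x ∈ D
  · exact hEA (h.mapsTo_left x hxD)
  · rw [h.eq_self x hxD (disjoint_left.1 hBE hx)]
    exact hBA (mem_sdiff.2 ⟨hx, hxD⟩)

end IsSwap

theorem exists_isSwap {α : Type*} [DecidableEq α] {D E : Finset α} (hDE : Disjoint D E)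
    (hcard : #D = #E) : ∃ σ : α → α, IsSwap σ D E := by
  let e : D ≃ E := equivOfCardEq hcard
  let σ : α → α := fun x =>
    if hD : x ∈ D then e ⟨x, hD⟩ else if hE : x ∈ E then e.symm ⟨x, hE⟩ else x
  have hσD : ∀ x (hx : x ∈ D), σ x = e ⟨x, hx⟩ := fun x hx => dif_pos hx
  have hσE : ∀ x (hx : x ∈ E), σ x = e.symm ⟨x, hx⟩ := fun x hx => by
    simp only [σ, dif_neg (disjoint_right.1 hDE hx), dif_pos hx]
  have hσ : ∀ x, x ∉ D → x ∉ E → σ x = x := fun x hD hE => by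
    simp only [σ, dif_neg hD, dif_neg hE]
  refine ⟨σ, fun x => ?_, fun x hx => hσD x hx ▸ (e _).2, fun x hx => hσE x hx ▸ (e.symm _).2, hσ⟩
  by_cases hD : x ∈ D
  · rw [hσD x hD, hσE _ (e _).2]
    simp
  by_cases hE : x ∈ E
  · rw [hσE x hE, hσD _ (e.symm _).2]
    simp
  · rw [hσ x hD hE, hσ x hD hE]

theorem mul_prod_le_mul_prod {ι : Type*} [DecidableEq ι] {s : Finset ι} {f g : ι → ℕ}
    {c d : ℕ} {i₀ : ι} (hi₀ : i₀ ∈ s) (h₀ : c * f i₀ ≤ d * g i₀) (h : ∀ i ∈ s, f i ≤ g i) :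
    c * ∏ i ∈ s, f i ≤ d * ∏ i ∈ s, g i := by
  rw [← mul_prod_erase s f hi₀, ← mul_prod_erase s g hi₀, ← mul_assoc, ← mul_assoc]
  exact Nat.mul_le_mul h₀ (prod_le_prod' fun i hi => h i (mem_of_mem_erase hi))

/-- The two products agree on the members satisfying both or neither of `p`, `q`, and `σ` pairs
the members satisfying only `q` with those satisfying only `p`. -/
theorem mul_prod_ite_le_of_involutive {α : Type*} [DecidableEq α] (K : Finset α)
    (p q : α → Prop) [DecidablePred p] [DecidablePred q] (u v : α → ℕ) {σ : α → α}
    (hσ : Involutive σ) (hσK : ∀ a ∈ K, σ a ∈ K ∧ (p (σ a) ↔ q a)) {c d : ℕ} {a₀ : α}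
    (ha₀ : a₀ ∈ K) (hpa₀ : ¬ p a₀) (hqa₀ : q a₀)
    (h₀ : c * (v (σ a₀) * u a₀) ≤ d * (u (σ a₀) * v a₀))
    (h : ∀ a ∈ K, ¬ p a → q a → v (σ a) * u a ≤ u (σ a) * v a) :
    c * ∏ a ∈ K, (if p a then v a else u a) ≤ d * ∏ a ∈ K, if q a then v a else u a := by
  have hqσ : ∀ a ∈ K, q (σ a) ↔ p a := fun a ha => by
    rw [← (hσK (σ a) (hσK a ha).1).2, hσ a]
  have hp : ∀ a, (if p a then v a else u a) =
      (if p a ↔ q a then (if p a then v a else u a) else 1) *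
        ((if p a ∧ ¬ q a then v a else 1) * (if ¬ p a ∧ q a then u a else 1)) := fun a => by
    by_cases p a <;> by_cases q a <;> simp [*]
  have hq : ∀ a, (if q a then v a else u a) =
      (if p a ↔ q a then (if p a then v a else u a) else 1) *
        ((if p a ∧ ¬ q a then u a else 1) * (if ¬ p a ∧ q a then v a else 1)) := fun a => by
    by_cases p a <;> by_cases q a <;> simp [*]
  have hswap : ∀ f : α → ℕ,
      ∏ a ∈ K with p a ∧ ¬ q a, f a = ∏ a ∈ K with ¬ p a ∧ q a, f (σ a) :=
    fun f => prod_nbij' σ σ (fun a ha => ?_) (fun a ha => ?_) (fun a _ => hσ a)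
      (fun a _ => hσ a) (fun a _ => by rw [hσ a])
  · rw [prod_congr rfl fun a _ => hp a, prod_congr rfl fun a _ => hq a]
    simp only [prod_mul_distrib, ← prod_filter, hswap]
    rw [mul_left_comm c, mul_left_comm d, ← prod_mul_distrib, ← prod_mul_distrib]
    refine Nat.mul_le_mul_left _ ?_
    exact mul_prod_le_mul_prod (mem_filter.2 ⟨ha₀, hpa₀, hqa₀⟩) h₀
      fun a ha => h a (mem_filter.1 ha).1 (mem_filter.1 ha).2.1 (mem_filter.1 ha).2.2
  all_goals
    obtain ⟨haK, ha⟩ := mem_filter.1 ha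
    refine mem_filter.2 ⟨(hσK a haK).1, ?_⟩
    rw [(hσK a haK).2, hqσ a haK]
    tauto

theorem add_mul_max_le {b b' m : ℕ} (hb : b = 0 ∨ 2 ≤ b) (hb' : b' = 0 ∨ 2 ≤ b')
    (hbb' : b ≤ b') (hm : 2 ≤ m) : (b' + m) * max b 1 ≤ max b' 1 * (b + m) := by
  rcases hb with rfl | hb
  · rcases hb' with rfl | hb'
    · simp
    · rw [show max 0 1 = 1 from rfl, max_eq_left (show 1 ≤ b' by omega)]
      nlinarith
  · rw [max_eq_left (by omega), max_eq_left (by omega)]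
    nlinarith

theorem six_mul_add_le {b m₀ m : ℕ} (hb : m₀ ≤ b) (hm₀ : 2 ≤ m₀) (hm : 2 ≤ m)
    (h : ¬ (m₀ = 2 ∧ m = 2)) : 6 * (b + m) ≤ 5 * (b * m) := by
  by_cases hm3 : 3 ≤ m
  · nlinarith
  · have : 3 ≤ b := by omega
    nlinarith

section StarWeight

variable {α β : Type*} [DecidableEq α]

/-- For disjoint colour classes `C i`, the number of colours that the stars with centres
`T 0, …, T (u - 1)` offer the set `A`. -/
def starWeight (T : ℕ → Finset α) (C : ℕ → Finset β) (u : ℕ) (A : Finset α) : ℕ :=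
  ∑ i ∈ range u with T i ⊆ A, #(C i)

variable {T : ℕ → Finset α} {C : ℕ → Finset β} {u : ℕ}

theorem starWeight_mono {A A' : Finset α} (h : ∀ i < u, T i ⊆ A → T i ⊆ A') :
    starWeight T C u A ≤ starWeight T C u A' :=
  sum_le_sum_of_subset fun i hi => by
    obtain ⟨hiu, hiA⟩ := mem_filter.1 hi
    exact mem_filter.2 ⟨hiu, h i (mem_range.1 hiu) hiA⟩

theorem le_starWeight {A : Finset α} {i : ℕ} (hi : i < u) (hiA : T i ⊆ A) :
    #(C i) ≤ starWeight T C u A :=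
  single_le_sum (f := fun i => #(C i)) (fun _ _ => Nat.zero_le _)
    (mem_filter.2 ⟨mem_range.2 hi, hiA⟩)

theorem starWeight_eq_zero {A : Finset α} (h : ∀ i < u, ¬ T i ⊆ A) :
    starWeight T C u A = 0 :=
  sum_eq_zero fun i hi => absurd (mem_filter.1 hi).2 (h i (mem_range.1 (mem_filter.1 hi).1))

theorem starWeight_eq_zero_or_two_le (hC : ∀ i < u, 2 ≤ #(C i)) (A : Finset α) :
    starWeight T C u A = 0 ∨ 2 ≤ starWeight T C u A := by
  rcases eq_empty_or_nonempty {i ∈ range u | T i ⊆ A} with h | ⟨i, hi⟩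
  · simp [starWeight, h]
  · exact Or.inr <| (hC i (mem_range.1 (mem_filter.1 hi).1)).trans <|
      single_le_sum (f := fun i => #(C i)) (fun _ _ => Nat.zero_le _) hi

variable [Fintype α]

/-- The factor `max _ 1` lets the product run over all `k`-sets: those outside the union of the
stars have weight `0`. -/
theorem card_colourings_eq_prod_ite {s k : ℕ} (hs : 0 < s) (T : ℕ → Finset α) (X : Finset α)
    (P : ℕ → Finset α → Prop) (hP : ∀ A, ∀ i < s - 1, P i A ↔ T i ⊆ A)
    (hPs : ∀ A, P (s - 1) A ↔ X ⊆ A) (C : ℕ → Finset β) (hCpos : ∀ i < s, 0 < #(C i))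
    (hC : (range s : Set ℕ).PairwiseDisjoint C) (F : Finset (Finset α))
    (hF : ∀ A, A ∈ F ↔ #A = k ∧ ∃ i ∈ range s, P i A) :
    Nat.card {φ : F → β // ∀ A : F, ∃ i ∈ range s, P i A ∧ φ A ∈ C i} =
      ∏ A ∈ powersetCard k univ, if X ⊆ A then starWeight T C (s - 1) A + #(C (s - 1))
        else max (starWeight T C (s - 1) A) 1 := by
  have hw : ∀ A, ∑ i ∈ range s with P i A, #(C i) =
      starWeight T C (s - 1) A + if X ⊆ A then #(C (s - 1)) else 0 := fun A => by
    obtain ⟨u, rfl⟩ : ∃ u, s = u + 1 := ⟨s - 1, by omega⟩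
    rw [sum_filter, sum_range_succ, starWeight, sum_filter]
    exact congrArg₂ _ (sum_congr rfl fun i hi => if_congr (hP A i (mem_range.1 hi)) rfl rfl)
      (if_congr (hPs A) rfl rfl)
  rw [card_colourings_eq_prod F (range s) P C hC, prod_eq_prod_max_one _ fun A => ?_]
  · refine prod_congr rfl fun A _ => ?_
    have := hCpos (s - 1) (by omega)
    rw [hw]
    split_ifs <;> omega
  · have hCne : ∀ i < s, C i ≠ ∅ := fun i hi =>
      nonempty_iff_ne_empty.1 (card_pos.1 (hCpos i hi))
    simp only [hF, mem_powersetCard, subset_univ, true_and, ne_eq, sum_eq_zero_iff, mem_filter,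
      mem_range, card_eq_zero, not_forall]
    exact and_congr_right fun _ => exists_congr fun i =>
      ⟨fun ⟨hi, h⟩ => ⟨⟨hi, h⟩, hCne i hi⟩, fun ⟨h, _⟩ => h⟩

theorem mul_prod_weight_le_of_isSwap {σ : α → α} {D E : Finset α} (hσ : IsSwap σ D E)
    {m k c d : ℕ} (hTE : ∀ i < u, Disjoint (T i) E) (hC : ∀ i < u, 2 ≤ #(C i)) (hm : 2 ≤ m)
    {A₀ : Finset α} (hA₀ : #A₀ = k) (hEA₀ : E ⊆ A₀) (hDA₀ : ¬ D ⊆ A₀)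
    (hb₀ : starWeight T C u A₀ = 0)
    (h₀ : c * (starWeight T C u (A₀.image σ) + m) ≤ d * (starWeight T C u (A₀.image σ) * m)) :
    c * ∏ A ∈ powersetCard k univ,
        (if D ⊆ A then starWeight T C u A + m else max (starWeight T C u A) 1) ≤
      d * ∏ A ∈ powersetCard k univ,
        (if E ⊆ A then starWeight T C u A + m else max (starWeight T C u A) 1) := by
  refine mul_prod_ite_le_of_involutive _ _ _ _ _ (σ := fun A => A.image σ)
    (fun A => by simp only [image_image, hσ.involutive.comp_self, image_id])
    (fun A hA => ⟨by simpa [hσ.card_image] using hA, hσ.subset_image_iff⟩)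
    (mem_powersetCard.2 ⟨subset_univ _, hA₀⟩) hDA₀ hEA₀ ?_ fun A _ _ hEA => ?_
  · rw [hb₀, zero_add, max_eq_right zero_le_one, mul_one]
    exact h₀.trans (Nat.mul_le_mul_left _ (Nat.mul_le_mul_right _ (le_max_left _ _)))
  · exact add_mul_max_le (starWeight_eq_zero_or_two_le hC A) (starWeight_eq_zero_or_two_le hC _)
      (starWeight_mono fun i hi hiA => hσ.subset_image (hTE i hi) hEA (sdiff_subset.trans hiA))
      hm

/-- The `k`-set whose pairing with its image under the swap makes the inequality strict. -/
theorem exists_card_eq_avoiding_centres {s t k : ℕ} (T : ℕ → Finset α) (E : Finset α) (hs : 2 ≤ s)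
    (hT : ∀ i < s, #(T i) = t) (hE : #E = t) (hEdisj : Disjoint E ((range s).biUnion T))
    (hmeet : 1 ≤ #(T 0 ∩ T (s - 1))) (hk : 2 * t ≤ k + #(T 0 ∩ T (s - 1)))
    (hn : k + s * t ≤ Fintype.card α) :
    ∃ A, #A = k ∧ E ⊆ A ∧ T 0 \ T (s - 1) ⊆ A ∧ ¬ T (s - 1) ⊆ A ∧ ∀ i < s - 1, ¬ T i ⊆ A := by
  set W := (range s).biUnion T
  set D := T (s - 1)
  have hW : #W ≤ s * t := card_biUnion_le.trans_eq <| by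
    rw [sum_congr rfl fun i hi => hT i (mem_range.1 hi), sum_const, card_range, smul_eq_mul]
  have hsd : #(T 0 \ D) + #(T 0 ∩ D) = t := by rw [card_sdiff_add_card_inter, hT 0 (by omega)]
  obtain ⟨A, hXA, hAY, hA⟩ := exists_subsuperset_card_eq (s := E ∪ (T 0 \ D))
    (t := (W \ (T 0 \ D))ᶜ) (n := k) (fun x hx => by
      rw [mem_compl, mem_sdiff, not_and_not_right]
      rcases mem_union.1 hx with hxE | hx0
      · exact fun hxW => absurd hxW (disjoint_left.1 hEdisj hxE)
      · exact fun _ => hx0)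
    ((card_union_le _ _).trans (by omega))
    (by rw [card_compl]; have := card_le_card (sdiff_subset (s := W) (t := T 0 \ D)); omega)
  have hAT : ∀ i < s, T i ⊆ A → T i ⊆ T 0 \ D := fun i hi hiA x hx => by
    have := hAY (hiA hx)
    rw [mem_compl, mem_sdiff, not_and_not_right] at this
    exact this (subset_biUnion_of_mem T (mem_range.2 hi) hx)
  obtain ⟨y, hy⟩ := card_pos.1 hmeet
  refine ⟨A, hA, subset_union_left.trans hXA, subset_union_right.trans hXA,
    fun hDA => ?_, fun i hi hiA => ?_⟩
  · exact (mem_sdiff.1 (hAT (s - 1) (by omega) hDA (mem_inter.1 hy).2)).2 (mem_inter.1 hy).2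
  · have := card_le_card (hAT i (by omega) hiA)
    rw [hT i (by omega)] at this
    omega

theorem mul_prod_weight_le_of_replace_centre {s t k c d : ℕ} (T : ℕ → Finset α)
    (E : Finset α) (C : ℕ → Finset β) (hs : 2 ≤ s) (hT : ∀ i < s, #(T i) = t) (hE : #E = t)
    (hEdisj : Disjoint E ((range s).biUnion T)) (hmeet : 1 ≤ #(T 0 ∩ T (s - 1)))
    (hk : 2 * t ≤ k + #(T 0 ∩ T (s - 1))) (hn : k + s * t ≤ Fintype.card α)
    (hC : ∀ i < s, 2 ≤ #(C i))
    (hcd : ∀ b, #(C 0) ≤ b → c * (b + #(C (s - 1))) ≤ d * (b * #(C (s - 1)))) :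
    c * ∏ A ∈ powersetCard k univ, (if T (s - 1) ⊆ A
        then starWeight T C (s - 1) A + #(C (s - 1)) else max (starWeight T C (s - 1) A) 1) ≤
      d * ∏ A ∈ powersetCard k univ, (if E ⊆ A
        then starWeight T C (s - 1) A + #(C (s - 1)) else max (starWeight T C (s - 1) A) 1) := by
  have hTE : ∀ i < s, Disjoint (T i) E := fun i hi =>
    (hEdisj.mono_right (subset_biUnion_of_mem T (mem_range.2 hi))).symm
  obtain ⟨σ, hσ⟩ := exists_isSwap (hTE (s - 1) (by omega)) ((hT _ (by omega)).trans hE.symm)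
  obtain ⟨A₀, hA₀, hEA₀, hT0A₀, hDA₀, hTA₀⟩ := exists_card_eq_avoiding_centres T E hs hT hE hEdisj hmeet hk hn
  exact mul_prod_weight_le_of_isSwap hσ (fun i hi => hTE i (by omega))
    (fun i hi => hC i (by omega)) (hC (s - 1) (by omega)) hA₀ hEA₀ hDA₀ (starWeight_eq_zero hTA₀)
    (hcd _ (le_starWeight (by omega) (hσ.subset_image (hTE 0 (by omega)) hEA₀ hT0A₀)))

end StarWeight

theorem stmt_13_general (k t r s n : ℕ) (hr : 5 ≤ r)
    (hn : k + r * t ≤ n)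
    -- `s = ⌈r/3⌉`, or possibly `s = ⌊r/3⌋` if `r ≡ 1 (mod 3)`
    (hs : s = (r + 2) / 3 ∨ (r % 3 = 1 ∧ s = r / 3))
    -- `I_1, ..., I_s` are distinct `t`-stars with centres `T 0, ..., T (s-1)`
    (T : ℕ → Finset (Fin n)) (hT : ∀ i < s, (T i).card = t)
    -- `|T_1 ∩ T_s| ≥ max(1, 2t - k)`
    (hT1s : max 1 (2 * t - k) ≤ (T 0 ∩ T (s - 1)).card)
    -- `T̃_s` is a `t`-set disjoint from `T_1 ∪ ... ∪ T_s`
    (Tnew : Finset (Fin n)) (hTnew : Tnew.card = t)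
    (hTnewdisj : Disjoint Tnew ((Finset.range s).biUnion T))
    -- `(C_1, ..., C_s)` is a partition of the `r` colours
    (Cp : ℕ → Finset (Fin r))
    (hCppos : ∀ i < s, 0 < (Cp i).card)
    (hCpdisj : ∀ i < s, ∀ j < s, i ≠ j → Disjoint (Cp i) (Cp j))
    (hCpcover : (Finset.range s).biUnion Cp = Finset.univ)
    -- whose vector of part sizes is an optimal solution of `MAX(r)`
    (hCpopt : IsGreatest (feasibleProds r) (∏ i ∈ Finset.range s, (Cp i).card)) :
    -- `F = I_1 ∪ ... ∪ I_s`,  `F̃ = I_1 ∪ ... ∪ I_{s-1} ∪ Ĩ_s`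
    (let F : Finset (Finset (Fin n)) :=
      Finset.univ.filter fun A : Finset (Fin n) =>
        A.card = k ∧ ∃ i ∈ Finset.range s, T i ⊆ A
    let Fnew : Finset (Finset (Fin n)) :=
      Finset.univ.filter fun A : Finset (Fin n) =>
        A.card = k ∧ ((∃ i ∈ Finset.range (s - 1), T i ⊆ A) ∨ Tnew ⊆ A)
    -- `|Φ(C)|` and `|Φ̃(C)|`
    let Phi : ℕ := Nat.card {φ : F → Fin r //
      ∀ A : F, ∃ i ∈ Finset.range s, T i ⊆ (A : Finset (Fin n)) ∧ φ A ∈ Cp i}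
    let PhiNew : ℕ := Nat.card {φ : Fnew → Fin r //
      ∀ A : Fnew, ∃ i ∈ Finset.range s,
        ((i < s - 1 ∧ T i ⊆ (A : Finset (Fin n))) ∨
          (i = s - 1 ∧ Tnew ⊆ (A : Finset (Fin n)))) ∧ φ A ∈ Cp i}
    -- conclusion: `|Φ̃(C)| ≥ (6/5)|Φ(C)|`, unless `|C_1| = |C_s| = 2`, in which
    -- case `|Φ̃(C)| ≥ |Φ(C)|`
    ((Cp 0).card = 2 ∧ (Cp (s - 1)).card = 2 → Phi ≤ PhiNew) ∧
      (¬((Cp 0).card = 2 ∧ (Cp (s - 1)).card = 2) → 6 * Phi ≤ 5 * PhiNew)) := by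
  intro F Fnew Phi PhiNew
  obtain ⟨hs2, hsr⟩ : 2 ≤ s ∧ s ≤ r := by omega
  have hCdisj : (range s : Set ℕ).PairwiseDisjoint Cp := fun i hi j hj hij =>
    hCpdisj i (mem_range.1 hi) j (mem_range.1 hj) hij
  have hparts := two_le_card_of_isGreatest_feasibleProds Cp hs2 hCppos hCdisj hCpcover hCpopt
  have hPhi : Phi = _ := card_colourings_eq_prod_ite (k := k) (by omega) T (T (s - 1))
    (fun i A => T i ⊆ A) (fun _ _ _ => Iff.rfl) (fun _ => Iff.rfl) Cp hCppos hCdisj F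
    (fun A => by simp [F])
  have hPhiNew : PhiNew = _ := card_colourings_eq_prod_ite (k := k) (by omega) T Tnew
    (fun i A => (i < s - 1 ∧ T i ⊆ A) ∨ (i = s - 1 ∧ Tnew ⊆ A))
    (fun _ i hi => by simp [hi, hi.ne]) (fun _ => by simp) Cp hCppos hCdisj Fnew
    (fun A => by simp only [Fnew, mem_filter, mem_univ, true_and, mem_range,
      exists_lt_pred_or_iff (by omega : 0 < s)])
  have key := fun {c d : ℕ} => mul_prod_weight_le_of_replace_centre (k := k) (c := c) (d := d)
    T Tnew Cp hs2 hT hTnew hTnewdisj ((le_max_left _ _).trans hT1s)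
    (by have := (le_max_right _ _).trans hT1s; omega) (by rw [Fintype.card_fin]; nlinarith) hparts
  have hm₀ := hparts 0 (by omega)
  have hm := hparts (s - 1) (by omega)
  rw [hPhi, hPhiNew]
  exact ⟨fun _ => by simpa using key (c := 1) (d := 1) fun b hb => by nlinarith,
    fun h => key fun b hb => six_mul_add_le hb hm₀ hm h⟩

theorem stmt_13 (k t r s n : ℕ) (ht : 1 ≤ t) (htk : t < k) (hr : 5 ≤ r)
    (hn : k + r * t ≤ n)
    -- `s = ⌈r/3⌉`, or possibly `s = ⌊r/3⌋` if `r ≡ 1 (mod 3)`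
    (hs : s = (r + 2) / 3 ∨ (r % 3 = 1 ∧ s = r / 3))
    -- `I_1, ..., I_s` are distinct `t`-stars with centres `T 0, ..., T (s-1)`
    (T : ℕ → Finset (Fin n)) (hT : ∀ i < s, (T i).card = t)
    (hTdist : ∀ i < s, ∀ j < s, i ≠ j → setStar n k (T i) ≠ setStar n k (T j))
    -- `|T_1 ∩ T_s| ≥ max(1, 2t - k)`
    (hT1s : max 1 (2 * t - k) ≤ (T 0 ∩ T (s - 1)).card)
    -- `T̃_s` is a `t`-set disjoint from `T_1 ∪ ... ∪ T_s`
    (Tnew : Finset (Fin n)) (hTnew : Tnew.card = t)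
    (hTnewdisj : Disjoint Tnew ((Finset.range s).biUnion T))
    -- `(C_1, ..., C_s)` is a partition of the `r` colours
    (Cp : ℕ → Finset (Fin r))
    (hCppos : ∀ i < s, 0 < (Cp i).card)
    (hCpdisj : ∀ i < s, ∀ j < s, i ≠ j → Disjoint (Cp i) (Cp j))
    (hCpcover : (Finset.range s).biUnion Cp = Finset.univ)
    -- whose vector of part sizes is an optimal solution of `MAX(r)`
    (hCpopt : IsGreatest (feasibleProds r) (∏ i ∈ Finset.range s, (Cp i).card)) :
    -- `F = I_1 ∪ ... ∪ I_s`,  `F̃ = I_1 ∪ ... ∪ I_{s-1} ∪ Ĩ_s`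
    (let F : Finset (Finset (Fin n)) :=
      Finset.univ.filter fun A : Finset (Fin n) =>
        A.card = k ∧ ∃ i ∈ Finset.range s, T i ⊆ A
    let Fnew : Finset (Finset (Fin n)) :=
      Finset.univ.filter fun A : Finset (Fin n) =>
        A.card = k ∧ ((∃ i ∈ Finset.range (s - 1), T i ⊆ A) ∨ Tnew ⊆ A)
    -- `|Φ(C)|` and `|Φ̃(C)|`
    let Phi : ℕ := Nat.card {φ : F → Fin r //
      ∀ A : F, ∃ i ∈ Finset.range s, T i ⊆ (A : Finset (Fin n)) ∧ φ A ∈ Cp i}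
    let PhiNew : ℕ := Nat.card {φ : Fnew → Fin r //
      ∀ A : Fnew, ∃ i ∈ Finset.range s,
        ((i < s - 1 ∧ T i ⊆ (A : Finset (Fin n))) ∨
          (i = s - 1 ∧ Tnew ⊆ (A : Finset (Fin n)))) ∧ φ A ∈ Cp i}
    -- conclusion: `|Φ̃(C)| ≥ (6/5)|Φ(C)|`, unless `|C_1| = |C_s| = 2`, in which
    -- case `|Φ̃(C)| ≥ |Φ(C)|`
    ((Cp 0).card = 2 ∧ (Cp (s - 1)).card = 2 → Phi ≤ PhiNew) ∧
      (¬((Cp 0).card = 2 ∧ (Cp (s - 1)).card = 2) → 6 * Phi ≤ 5 * PhiNew)) :=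
  stmt_13_general k t r s n hr hn hs T hT hT1s Tnew hTnew hTnewdisj Cp hCppos hCpdisj hCpcover
    hCpopt
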